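/- arXiv:2112.13625 — 4 statements merged into one kernel-verified Lean document; each statement's English description precedes it below -/
import Mathlib

section
/- Let n ≥ 2, let b_{ij} > 0 be symmetric (i ≠ j), let c_1,…,c_n > 0 with Σ_i c_i = 1, and define the matrix M by M_{ii} = Σ_{k≠i} c_k b_{ik} and M_{ij} = −√(c_i c_j) b_{ij} for i ≠ j. Then for all z ∈ ℝ^n, zᵀ M z ≥ μ |P_L z|², where μ = min_{i≠j} b_{ij} and P_L is the orthogonal projection onto the hyperplane orthogonal to (√c_1,…,√c_n). -/
/-!
Write `s = (√c_i)_i`, a unit vector. Symmetrizing in `i, j` turns the quadratic form of `M` into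
`½ Σ_{i,j} b_ij (s_j z_i - s_i z_j)²`, while Lagrange's identity gives
`|P_L z|² = |z|² - (s · z)² = ½ Σ_{i,j} (s_j z_i - s_i z_j)²`. The diagonal terms vanish, and
off the diagonal `μ ≤ b_ij`, so the two sums compare termwise.
-/

open Finset

section CrossTerms

variable {ι R : Type*} [Fintype ι] [CommRing R]

theorem sum_sum_mul_cross_sq_eq (B : ι → ι → R) (hB : ∀ i j, B i j = B j i) (s z : ι → R) :
    ∑ i, ∑ j, B i j * (s j * z i - s i * z j) ^ 2
      = 2 * ∑ i, ∑ j, B i j * (s j ^ 2 * z i ^ 2 - s i * s j * (z i * z j)) := by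
  have hswap : ∑ i, ∑ j, B i j * (s i ^ 2 * z j ^ 2 - s i * s j * (z i * z j))
      = ∑ i, ∑ j, B i j * (s j ^ 2 * z i ^ 2 - s i * s j * (z i * z j)) := by
    rw [sum_comm]
    exact sum_congr rfl fun i _ => sum_congr rfl fun j _ => by rw [hB]; ring
  calc ∑ i, ∑ j, B i j * (s j * z i - s i * z j) ^ 2
      = ∑ i, ∑ j, (B i j * (s j ^ 2 * z i ^ 2 - s i * s j * (z i * z j))
          + B i j * (s i ^ 2 * z j ^ 2 - s i * s j * (z i * z j))) :=
        sum_congr rfl fun i _ => sum_congr rfl fun j _ => by ring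
    _ = 2 * ∑ i, ∑ j, B i j * (s j ^ 2 * z i ^ 2 - s i * s j * (z i * z j)) := by
        simp only [sum_add_distrib]
        rw [hswap, two_mul]

theorem sum_sum_cross_sq_eq (s z : ι → R) :
    ∑ i, ∑ j, (s j * z i - s i * z j) ^ 2
      = 2 * ((∑ i, s i ^ 2) * ∑ i, z i ^ 2 - (∑ i, s i * z i) ^ 2) := by
  have h := sum_sum_mul_cross_sq_eq (fun _ _ => (1 : R)) (fun _ _ => rfl) s z
  simp only [one_mul] at h
  rw [h, sq (∑ i, s i * z i), mul_comm (∑ i, s i ^ 2), sum_mul_sum, sum_mul_sum,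
    ← sum_sub_distrib]
  congr 1
  exact sum_congr rfl fun i _ => by rw [← sum_sub_distrib]; exact sum_congr rfl fun j _ => by ring

theorem sum_sub_mul_sum_sq_of_sum_sq_eq_one {s : ι → R} (hs : ∑ i, s i ^ 2 = 1) (z : ι → R) :
    ∑ i, (z i - s i * ∑ k, s k * z k) ^ 2 = ∑ i, z i ^ 2 - (∑ k, s k * z k) ^ 2 := by
  set S := ∑ k, s k * z k
  calc ∑ i, (z i - s i * S) ^ 2 = ∑ i, (z i ^ 2 - 2 * S * (s i * z i) + S ^ 2 * s i ^ 2) :=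
        sum_congr rfl fun i _ => by ring
    _ = ∑ i, z i ^ 2 - 2 * S * S + S ^ 2 * ∑ i, s i ^ 2 := by
        rw [sum_add_distrib, sum_sub_distrib, ← mul_sum, ← mul_sum]
    _ = ∑ i, z i ^ 2 - S ^ 2 := by rw [hs]; ring

end CrossTerms

theorem two_mul_sum_sum_mul_maxwellStefan_eq {ι : Type*} [Fintype ι] [DecidableEq ι]
    (b : ι → ι → ℝ) (hbs : ∀ i j, b i j = b j i) (c : ι → ℝ) (hc : ∀ i, 0 ≤ c i)
    (M : Matrix ι ι ℝ)
    (hM : ∀ i j, M i j = if i = j then ∑ k ∈ Finset.univ.filter (fun k => k ≠ i), c k * b i k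
      else -(Real.sqrt (c i * c j) * b i j)) (z : ι → ℝ) :
    2 * ∑ i, ∑ j, z i * M i j * z j
      = ∑ i, ∑ j, b i j * (Real.sqrt (c j) * z i - Real.sqrt (c i) * z j) ^ 2 := by
  rw [sum_sum_mul_cross_sq_eq b hbs]
  congr 1
  refine sum_congr rfl fun i _ => ?_
  have hdiag : z i * M i i * z i = ∑ k ∈ univ.erase i, c k * b i k * (z i * z i) := by
    rw [hM i i, if_pos rfl, filter_ne', mul_sum, sum_mul]
    exact sum_congr rfl fun k _ => by ring
  conv_rhs => rw [← sum_erase univ (a := i) (by ring)]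
  rw [← add_sum_erase _ _ (mem_univ i), hdiag, ← sum_add_distrib]
  refine sum_congr rfl fun j hj => ?_
  rw [hM i j, if_neg (ne_of_mem_erase hj).symm, Real.sqrt_mul (hc i), Real.sq_sqrt (hc j)]
  ring

theorem stmt3_general (n : ℕ) (b : Fin n → Fin n → ℝ)
    (hbs : ∀ i j, b i j = b j i)
    (c : Fin n → ℝ) (hc : ∀ i, 0 < c i) (hsum : ∑ i, c i = 1)
    (M : Matrix (Fin n) (Fin n) ℝ)
    (hM : ∀ i j, M i j = if i = j then ∑ k ∈ Finset.univ.filter (fun k => k ≠ i), c k * b i k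
      else -(Real.sqrt (c i * c j) * b i j))
    (μ : ℝ) (hμle : ∀ i j, i ≠ j → μ ≤ b i j) :
    ∀ z : Fin n → ℝ,
      μ * ∑ i, (z i - Real.sqrt (c i) * ∑ k, Real.sqrt (c k) * z k) ^ 2 ≤
        ∑ i, ∑ j, z i * M i j * z j := by
  intro z
  have hunit : ∑ i, Real.sqrt (c i) ^ 2 = 1 := by simp only [Real.sq_sqrt (hc _).le, hsum]
  have hcmp : ∑ i, ∑ j, μ * (Real.sqrt (c j) * z i - Real.sqrt (c i) * z j) ^ 2
      ≤ ∑ i, ∑ j, b i j * (Real.sqrt (c j) * z i - Real.sqrt (c i) * z j) ^ 2 := by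
    refine sum_le_sum fun i _ => sum_le_sum fun j _ => ?_
    rcases eq_or_ne i j with rfl | hij
    · simp
    · exact mul_le_mul_of_nonneg_right (hμle i j hij) (sq_nonneg _)
  simp only [← mul_sum, sum_sum_cross_sq_eq, hunit] at hcmp
  rw [← two_mul_sum_sum_mul_maxwellStefan_eq b hbs c (fun i => (hc i).le) M hM] at hcmp
  rw [sum_sub_mul_sum_sq_of_sum_sq_eq_one hunit]
  linarith

/-- For the Maxwell–Stefan matrix `M` built from symmetric positive `b_{ij}` and
molar fractions `c_i > 0` with `Σ c_i = 1`, one has `zᵀ M z ≥ μ |P_L z|²` for all `z`, where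
`μ = min_{i≠j} b_{ij}` and `P_L` is the orthogonal projection onto the hyperplane orthogonal to
`(√c_1,…,√c_n)`, so that `(P_L z)_i = z_i - √c_i Σ_k √c_k z_k`. -/
theorem stmt3 (n : ℕ) (hn : 2 ≤ n) (b : Fin n → Fin n → ℝ)
    (hbs : ∀ i j, b i j = b j i) (hbpos : ∀ i j, i ≠ j → 0 < b i j)
    (c : Fin n → ℝ) (hc : ∀ i, 0 < c i) (hsum : ∑ i, c i = 1)
    (M : Matrix (Fin n) (Fin n) ℝ)
    (hM : ∀ i j, M i j = if i = j then ∑ k ∈ Finset.univ.filter (fun k => k ≠ i), c k * b i k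
      else -(Real.sqrt (c i * c j) * b i j))
    (μ : ℝ) (hμle : ∀ i j, i ≠ j → μ ≤ b i j) (hμmem : ∃ i j, i ≠ j ∧ μ = b i j) :
    ∀ z : Fin n → ℝ,
      μ * ∑ i, (z i - Real.sqrt (c i) * ∑ k, Real.sqrt (c k) * z k) ^ 2 ≤
        ∑ i, ∑ j, z i * M i j * z j :=
  stmt3_general n b hbs c hc hsum M hM μ hμle
end

section
/- Under the hypotheses of the preceding statement (M defined from positive symmetric b_{ij} and molar fractions c_i, satisfying zᵀMz ≥ μ|P_L z|² with μ > 0, and M annihilating the vector (√c_1,…,√c_n)), the matrix M P_L + P_{L⊥} is invertible, so the Bott–Duffin inverse M^{BD} = P_L (M P_L + P_{L⊥})^{-1} is well-defined; moreover M^{BD} is symmetric and positive semidefinite on ℝ^n. -/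
/-!
Put `s = √c`, a unit vector since `∑ cᵢ = 1`, so that `P_{L⊥} = s sᵀ` and `P_L = 1 - s sᵀ`.
As `M` is symmetric with `M s = 0`, we have `M P_L = M`, hence `A := M P_L + P_{L⊥} = M + s sᵀ`,
and coercivity of `M` on `L = s^⊥` makes `A` positive definite. Moreover `A P_L = M`, so
`P_L A⁻¹ = A⁻¹ (A P_L) A⁻¹ = A⁻¹ M A⁻¹` is a congruence of the positive semidefinite `M`.
-/

open Matrix Finset

section

variable {ι : Type*} [Fintype ι]

lemma sum_sum_mul_mul_eq_dotProduct_mulVec {R : Type*} [CommSemiring R] (N : Matrix ι ι R)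
    (z : ι → R) : ∑ i, ∑ j, z i * N i j * z j = z ⬝ᵥ N *ᵥ z := by
  simp only [dotProduct, mulVec, mul_sum]
  exact sum_congr rfl fun i _ => sum_congr rfl fun j _ => by ring

lemma posSemidef_of_coercive {M Q : Matrix ι ι ℝ} (hM : M.IsSymm) {μ : ℝ} (hμ : 0 ≤ μ)
    (hcoer : ∀ z, μ * ∑ i, (Q *ᵥ z) i ^ 2 ≤ z ⬝ᵥ M *ᵥ z) : M.PosSemidef :=
  .of_dotProduct_mulVec_nonneg (isHermitian_iff_isSymm.mpr hM) fun z =>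
    (mul_nonneg hμ (sum_nonneg fun _ _ => sq_nonneg _)).trans (hcoer z)

lemma posDef_add_vecMulVec_self {M : Matrix ι ι ℝ} (hM : M.PosSemidef) {s : ι → ℝ}
    (hpos : ∀ z, s ⬝ᵥ z = 0 → z ≠ 0 → 0 < z ⬝ᵥ M *ᵥ z) : (M + vecMulVec s s).PosDef := by
  refine .of_dotProduct_mulVec_pos (hM.isHermitian.add ?_) fun z hz => ?_
  · rw [isHermitian_iff_isSymm, IsSymm, transpose_vecMulVec]
  have hsplit : z ⬝ᵥ (M + vecMulVec s s) *ᵥ z = z ⬝ᵥ M *ᵥ z + (s ⬝ᵥ z) ^ 2 := by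
    rw [add_mulVec, dotProduct_add, vecMulVec_mulVec, op_smul_eq_smul, dotProduct_smul,
      smul_eq_mul, dotProduct_comm z s, sq]
  rw [star_trivial, hsplit]
  by_cases hsz : s ⬝ᵥ z = 0
  · simpa [hsz] using hpos z hsz hz
  · have hMz := hM.dotProduct_mulVec_nonneg z
    rw [star_trivial] at hMz
    positivity

variable [DecidableEq ι]

noncomputable def maxwellStefanMatrix (c : ι → ℝ) (b : ι → ι → ℝ) : Matrix ι ι ℝ :=
  Matrix.of fun i j => if i = j then ∑ k ∈ univ.filter (fun k => k ≠ i), c k * b i k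
    else -(Real.sqrt (c i * c j) * b i j)

lemma maxwellStefanMatrix_isSymm {c : ι → ℝ} {b : ι → ι → ℝ} (hb : ∀ i j, b i j = b j i) :
    (maxwellStefanMatrix c b).IsSymm := by
  ext i j
  rcases eq_or_ne i j with rfl | hij
  · rfl
  · simp [maxwellStefanMatrix, hij, hij.symm, hb i j, mul_comm (c i)]

lemma add_vecMulVec_self_mul_one_sub {M : Matrix ι ι ℝ} {s : ι → ℝ} (hMs : M *ᵥ s = 0)
    (hs : s ⬝ᵥ s = 1) : (M + vecMulVec s s) * (1 - vecMulVec s s) = M := by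
  rw [mul_sub, mul_one, add_mul, mul_vecMulVec, hMs, zero_vecMulVec, vecMulVec_mul_vecMulVec, hs,
    one_smul]
  abel

lemma posSemidef_mul_nonsing_inv {R : Type*} [CommRing R] [PartialOrder R] [StarRing R]
    {A P M : Matrix ι ι R} (hA : A.IsHermitian) (hdet : IsUnit A.det) (hM : M.PosSemidef)
    (hAP : A * P = M) : (P * A⁻¹).PosSemidef := by
  have hconj : P * A⁻¹ = A⁻¹ᴴ * M * A⁻¹ := by
    rw [conjTranspose_nonsing_inv, hA.eq, ← hAP, ← mul_assoc, nonsing_inv_mul _ hdet, one_mul]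
  exact hconj ▸ hM.conjTranspose_mul_mul_same _

end

theorem stmt4_general (n : ℕ) (b : Fin n → Fin n → ℝ)
    (hbs : ∀ i j, b i j = b j i)
    (c : Fin n → ℝ) (hc : ∀ i, 0 < c i) (hsum : ∑ i, c i = 1)
    (M PL PLperp : Matrix (Fin n) (Fin n) ℝ)
    (hM : ∀ i j, M i j = if i = j then ∑ k ∈ Finset.univ.filter (fun k => k ≠ i), c k * b i k
      else -(Real.sqrt (c i * c j) * b i j))
    (hPL : ∀ i j, PL i j = (if i = j then (1 : ℝ) else 0) - Real.sqrt (c i * c j))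
    (hPLperp : ∀ i j, PLperp i j = Real.sqrt (c i * c j))
    (μ : ℝ) (hμpos : 0 < μ)
    (hcoer : ∀ z : Fin n → ℝ,
      μ * ∑ i, (PL.mulVec z i) ^ 2 ≤ ∑ i, ∑ j, z i * M i j * z j)
    (hker : M.mulVec (fun i => Real.sqrt (c i)) = 0) :
    IsUnit (M * PL + PLperp).det ∧
    (PL * (M * PL + PLperp)⁻¹).transpose = PL * (M * PL + PLperp)⁻¹ ∧
    ∀ z : Fin n → ℝ, 0 ≤ ∑ i, ∑ j, z i * (PL * (M * PL + PLperp)⁻¹) i j * z j := by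
  set s : Fin n → ℝ := fun i => Real.sqrt (c i)
  have hs : s ⬝ᵥ s = 1 := by simpa [s, dotProduct, Real.mul_self_sqrt (hc _).le] using hsum
  have hPLperp_eq : PLperp = vecMulVec s s := by
    ext i j; rw [hPLperp, Real.sqrt_mul (hc i).le]; rfl
  have hPL_eq : PL = 1 - vecMulVec s s := by
    ext i j; rw [Matrix.sub_apply, one_apply, ← hPLperp_eq, hPL, hPLperp]
  have hMsymm : M.IsSymm :=
    (Matrix.ext hM : M = maxwellStefanMatrix c b) ▸ maxwellStefanMatrix_isSymm hbs
  simp only [sum_sum_mul_mul_eq_dotProduct_mulVec] at hcoer ⊢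
  have hMpsd := posSemidef_of_coercive hMsymm hμpos.le hcoer
  have hA : M * PL + PLperp = M + vecMulVec s s := by
    rw [hPL_eq, hPLperp_eq, mul_sub, mul_one, mul_vecMulVec, hker, zero_vecMulVec, sub_zero]
  have hApd : (M + vecMulVec s s).PosDef := posDef_add_vecMulVec_self hMpsd fun z hsz hz => by
    have hPLz : PL *ᵥ z = z := by
      rw [hPL_eq, sub_mulVec, one_mulVec, vecMulVec_mulVec, hsz, MulOpposite.op_zero, zero_smul,
        sub_zero]
    calc 0 < μ * ∑ i, z i ^ 2 :=
          mul_pos hμpos (by simpa [dotProduct, sq] using dotProduct_star_self_pos_iff.mpr hz)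
      _ ≤ z ⬝ᵥ M *ᵥ z := by simpa only [hPLz] using hcoer z
  have hdet : IsUnit (M + vecMulVec s s).det := (isUnit_iff_isUnit_det _).mp hApd.isUnit
  have hBD := posSemidef_mul_nonsing_inv hApd.isHermitian hdet hMpsd
    (hPL_eq ▸ add_vecMulVec_self_mul_one_sub hker hs)
  rw [hA]
  refine ⟨hdet, isHermitian_iff_isSymm.mp hBD.isHermitian, fun z => ?_⟩
  simpa using hBD.dotProduct_mulVec_nonneg z

/-- For the Maxwell–Stefan matrix `M` (with `zᵀMz ≥ μ|P_L z|²`, `μ > 0`, and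
`M √c = 0`), the matrix `M P_L + P_{L⊥}` is invertible, so the Bott–Duffin inverse
`M^BD = P_L (M P_L + P_{L⊥})⁻¹` is well-defined; moreover `M^BD` is symmetric and positive
semidefinite. Here `(P_L)_{ij} = δ_{ij} - √(c_i c_j)` and `(P_{L⊥})_{ij} = √(c_i c_j)`. -/
theorem stmt4 (n : ℕ) (hn : 2 ≤ n) (b : Fin n → Fin n → ℝ)
    (hbs : ∀ i j, b i j = b j i) (hbpos : ∀ i j, i ≠ j → 0 < b i j)
    (c : Fin n → ℝ) (hc : ∀ i, 0 < c i) (hsum : ∑ i, c i = 1)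
    (M PL PLperp : Matrix (Fin n) (Fin n) ℝ)
    (hM : ∀ i j, M i j = if i = j then ∑ k ∈ Finset.univ.filter (fun k => k ≠ i), c k * b i k
      else -(Real.sqrt (c i * c j) * b i j))
    (hPL : ∀ i j, PL i j = (if i = j then (1 : ℝ) else 0) - Real.sqrt (c i * c j))
    (hPLperp : ∀ i j, PLperp i j = Real.sqrt (c i * c j))
    (μ : ℝ) (hμpos : 0 < μ)
    (hcoer : ∀ z : Fin n → ℝ,
      μ * ∑ i, (PL.mulVec z i) ^ 2 ≤ ∑ i, ∑ j, z i * M i j * z j)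
    (hker : M.mulVec (fun i => Real.sqrt (c i)) = 0) :
    IsUnit (M * PL + PLperp).det ∧
    (PL * (M * PL + PLperp)⁻¹).transpose = PL * (M * PL + PLperp)⁻¹ ∧
    ∀ z : Fin n → ℝ, 0 ≤ ∑ i, ∑ j, z i * (PL * (M * PL + PLperp)⁻¹) i j * z j :=
  stmt4_general n b hbs c hc hsum M PL PLperp hM hPL hPLperp μ hμpos hcoer hker
end

section
/- If b_{ij} > 0 for all i ≠ j are symmetric, ρ_1,…,ρ_n > 0 and θ > 0, then any vectors u_1,…,u_n ∈ ℝ^d satisfying θ Σ_{j≠i} b_{ij} ρ_i ρ_j (u_i − u_j) = 0 for all i and Σ_i ρ_i u_i = 0 must all vanish: u_i = 0 for every i. -/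
/-! The equations say that each `u_i` is a weighted average of the others, with positive weights
`b_{ij} ρ_i ρ_j`. Coordinatewise, the maximum principle forces all `u_i` to be equal: at a
maximal coordinate every term of the sum is nonnegative, hence zero. The constraint
`Σ_i ρ_i u_i = 0` with `Σ_i ρ_i > 0` then makes the common value zero. -/

open Finset

theorem eq_of_forall_sum_mul_sub_eq_zero {ι : Type*} [Fintype ι] {c : ι → ι → ℝ}
    (hc : ∀ i j, i ≠ j → 0 < c i j) {v : ι → ℝ} (hv : ∀ i, ∑ j, c i j * (v i - v j) = 0)
    (i j : ι) : v i = v j := by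
  have : Nonempty ι := ⟨i⟩
  obtain ⟨m, hm⟩ := Finite.exists_max v
  have hterm_nonneg : ∀ k, 0 ≤ c m k * (v m - v k) := fun k => by
    rcases eq_or_ne m k with rfl | hmk
    · simp
    · exact mul_nonneg (hc m k hmk).le (sub_nonneg.2 (hm k))
  have hconst : ∀ k, v k = v m := fun k => by
    rcases eq_or_ne m k with rfl | hmk
    · rfl
    · have hzero := (sum_eq_zero_iff_of_nonneg fun k _ => hterm_nonneg k).1 (hv m) k (mem_univ k)
      have := (mul_eq_zero.1 hzero).resolve_left (hc m k hmk).ne'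
      linarith
  rw [hconst i, hconst j]

theorem eq_of_forall_sum_smul_sub_eq_zero {ι κ : Type*} [Fintype ι] {c : ι → ι → ℝ}
    (hc : ∀ i j, i ≠ j → 0 < c i j) {u : ι → κ → ℝ}
    (hu : ∀ i, ∑ j, c i j • (u i - u j) = 0) (i j : ι) : u i = u j := by
  funext k
  refine eq_of_forall_sum_mul_sub_eq_zero hc (v := fun i => u i k) (fun i => ?_) i j
  simpa using congrFun (hu i) k

theorem stmt6_general (n d : ℕ) (b : Fin n → Fin n → ℝ)
    (hbpos : ∀ i j, i ≠ j → 0 < b i j)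
    (ρ : Fin n → ℝ) (hρ : ∀ i, 0 < ρ i) (θ : ℝ) (hθ : 0 < θ)
    (u : Fin n → (Fin d → ℝ))
    (hsys : ∀ i, θ • ∑ j, (b i j * ρ i * ρ j) • (u i - u j) = 0)
    (hcon : ∑ i, ρ i • u i = 0) :
    ∀ i, u i = 0 := by
  intro i
  have hconst : ∀ j, u j = u i := fun j =>
    eq_of_forall_sum_smul_sub_eq_zero
      (fun j k hjk => mul_pos (mul_pos (hbpos j k hjk) (hρ j)) (hρ k))
      (fun j => (smul_eq_zero.1 (hsys j)).resolve_left hθ.ne') j i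
  have hsum : (∑ j, ρ j) • u i = 0 := by
    rw [← hcon, sum_smul]
    exact sum_congr rfl fun j _ => by rw [hconst j]
  exact (smul_eq_zero.1 hsum).resolve_left (sum_pos (fun j _ => hρ j) ⟨i, mem_univ i⟩).ne'

/-- With strictly positive symmetric `b_{ij}`, positive densities `ρ_i` and
temperature `θ > 0`, any `u_1,…,u_n` satisfying `θ Σ_j b_{ij} ρ_i ρ_j (u_i - u_j) = 0` for all
`i` together with `Σ_i ρ_i u_i = 0` must all vanish. -/
theorem stmt6 (n d : ℕ) (hn : 2 ≤ n) (b : Fin n → Fin n → ℝ)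
    (hbs : ∀ i j, b i j = b j i) (hbpos : ∀ i j, i ≠ j → 0 < b i j)
    (ρ : Fin n → ℝ) (hρ : ∀ i, 0 < ρ i) (θ : ℝ) (hθ : 0 < θ)
    (u : Fin n → (Fin d → ℝ))
    (hsys : ∀ i, θ • ∑ j, (b i j * ρ i * ρ j) • (u i - u j) = 0)
    (hcon : ∑ i, ρ i • u i = 0) :
    ∀ i, u i = 0 :=
  stmt6_general n d b hbpos ρ hρ θ hθ u hsys hcon
end

section
/- For the multicomponent ideal gas with free energy ρψ = Σ_i R_i θ ρ_i log ρ_i − Σ_i c_i ρ_i θ log θ (R_i, c_i > 0), the relative quantity J(ω|\barω) := ρe − \bar{ρe} − Σ_i \barμ_i (ρ_i − \barρ_i) − \barθ(ρη − \bar{ρη}) equals \barθ Σ_i R_i [ρ_i log ρ_i − \barρ_i log \barρ_i − (1 + log \barρ_i)(ρ_i − \barρ_i)] + \barθ Σ_i c_i ρ_i [−log θ + log \barθ + (θ − \barθ)/\barθ], and J(ω|\barω) ≥ 0 with equality iff ω = \barω, for ρ_i, \barρ_i, θ, \barθ > 0. -/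
/-!
Both brackets of the relative quantity are Bregman divergences, of the convex functions
`x ↦ x log x` (in the densities) and `x ↦ -log x` (in the temperature), and each is a
perspective `y · klFun (x / y)` of `klFun t = t log t + 1 - t`, which is nonnegative on
`[0, ∞)` and vanishes only at `t = 1`. After the identity, `J` is therefore a positive
combination of such terms, and it vanishes exactly when every density and the temperature
agree with the reference state.
-/

open Real InformationTheory

namespace Real

variable {x y : ℝ}

lemma mul_klFun_div_nonneg (hx : 0 ≤ x) (hy : 0 ≤ y) : 0 ≤ y * klFun (x / y) :=
  mul_nonneg hy (klFun_nonneg (div_nonneg hx hy))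

lemma mul_klFun_div_eq_zero_iff (hx : 0 ≤ x) (hy : 0 < y) : y * klFun (x / y) = 0 ↔ x = y := by
  rw [mul_eq_zero, or_iff_right hy.ne', klFun_eq_zero_iff (div_nonneg hx hy.le),
    div_eq_one_iff_eq hy.ne']

lemma mul_log_bregman_eq (hx : 0 < x) (hy : 0 < y) :
    x * log x - y * log y - (1 + log y) * (x - y) = y * klFun (x / y) := by
  rw [klFun_apply, log_div hx.ne' hy.ne']
  field_simp
  ring

lemma neg_log_bregman_eq (hx : 0 < x) (hy : 0 < y) :
    -log x + log y + (x - y) / y = x * klFun (y / x) / y := by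
  rw [klFun_apply, log_div hy.ne' hx.ne']
  field_simp
  ring

end Real

/-- For the multicomponent ideal gas with `μ_i = R_i(1+log ρ_i)θ - c_i θ log θ`,
`ρη = -Σ R_i ρ_i log ρ_i + Σ c_i ρ_i (1 + log θ)`, `ρe = Σ c_i ρ_i θ`, the relative quantity
`J(ω|ω̄) = ρe - ρ̄ē - Σ μ̄_i(ρ_i - ρ̄_i) - θ̄(ρη - ρ̄η̄)` equals
`θ̄ Σ R_i [ρ_i log ρ_i - ρ̄_i log ρ̄_i - (1+log ρ̄_i)(ρ_i - ρ̄_i)]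
 + θ̄ Σ c_i ρ_i [-log θ + log θ̄ + (θ-θ̄)/θ̄]`, and `J ≥ 0` with equality iff `ω = ω̄`. -/
theorem stmt15 (n : ℕ) (hn : 0 < n) (R cc : Fin n → ℝ)
    (hR : ∀ i, 0 < R i) (hcc : ∀ i, 0 < cc i)
    (ρ ρ' : Fin n → ℝ) (θ θ' : ℝ)
    (hρ : ∀ i, 0 < ρ i) (hρ' : ∀ i, 0 < ρ' i) (hθ : 0 < θ) (hθ' : 0 < θ')
    (J : ℝ)
    (hJ : J = (∑ i, cc i * ρ i * θ) - (∑ i, cc i * ρ' i * θ')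
      - (∑ i, (R i * (1 + Real.log (ρ' i)) * θ' - cc i * θ' * Real.log θ') * (ρ i - ρ' i))
      - θ' * (((-∑ i, R i * ρ i * Real.log (ρ i)) + ∑ i, cc i * ρ i * (1 + Real.log θ))
            - ((-∑ i, R i * ρ' i * Real.log (ρ' i)) + ∑ i, cc i * ρ' i * (1 + Real.log θ')))) :
    J = θ' * (∑ i, R i * (ρ i * Real.log (ρ i) - ρ' i * Real.log (ρ' i)
            - (1 + Real.log (ρ' i)) * (ρ i - ρ' i)))
      + θ' * (∑ i, cc i * ρ i * (-Real.log θ + Real.log θ' + (θ - θ') / θ'))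
      ∧ 0 ≤ J ∧ (J = 0 ↔ ρ = ρ' ∧ θ = θ') := by
  have hident : J = θ' * (∑ i, R i * (ρ i * log (ρ i) - ρ' i * log (ρ' i)
            - (1 + log (ρ' i)) * (ρ i - ρ' i)))
      + θ' * (∑ i, cc i * ρ i * (-log θ + log θ' + (θ - θ') / θ')) := by
    rw [hJ]
    simp only [Finset.mul_sum, ← Finset.sum_neg_distrib, ← Finset.sum_add_distrib,
      ← Finset.sum_sub_distrib]
    refine Finset.sum_congr rfl fun i _ => ?_
    field_simp
    ring
  refine ⟨hident, ?_⟩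
  simp only [fun i => mul_log_bregman_eq (hρ i) (hρ' i), neg_log_bregman_eq hθ hθ',
    ← Finset.sum_mul] at hident
  set D := ∑ i, R i * (ρ' i * klFun (ρ i / ρ' i))
  set G := θ * klFun (θ' / θ) / θ'
  have hD : 0 ≤ D := Finset.sum_nonneg fun i _ =>
    mul_nonneg (hR i).le (mul_klFun_div_nonneg (hρ i).le (hρ' i).le)
  have hG : 0 ≤ G := div_nonneg (mul_klFun_div_nonneg hθ'.le hθ.le) hθ'.le
  have hmass : 0 < ∑ i, cc i * ρ i :=
    Finset.sum_pos (fun i _ => mul_pos (hcc i) (hρ i)) ⟨⟨0, hn⟩, Finset.mem_univ _⟩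
  have hD0 : D = 0 ↔ ρ = ρ' := by
    rw [Finset.sum_eq_zero_iff_of_nonneg fun i _ =>
      mul_nonneg (hR i).le (mul_klFun_div_nonneg (hρ i).le (hρ' i).le), funext_iff]
    simp only [Finset.mem_univ, true_imp_iff, mul_eq_zero, (hR _).ne', false_or,
      mul_klFun_div_eq_zero_iff (hρ _).le (hρ' _)]
  have hG0 : G = 0 ↔ θ = θ' := by
    rw [div_eq_zero_iff, or_iff_left hθ'.ne', mul_klFun_div_eq_zero_iff hθ'.le hθ, eq_comm]
  rw [hident, ← mul_add]
  refine ⟨by positivity, ?_⟩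
  rw [mul_eq_zero, or_iff_right hθ'.ne', add_eq_zero_iff_of_nonneg hD (by positivity),
    mul_eq_zero, or_iff_right hmass.ne', hD0, hG0]
end
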